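/- Chained entailment along an acyclic hyperpath: let a₁,…,a_ℓ be a simple path of 1-2-hyperarcs, each a_k corresponding to a triple u_k|o_k with u_k = t(a_k) and t(a_{k+1}) ∈ h(a_k) for all k, and with all the 2-element node sets u_1,…,u_ℓ and the final head pairwise compatible (each consecutive pair sharing exactly one leaf, with o_k ∈ u_{k+1}). Then any rooted binary tree displaying all ℓ triples u_k|o_k also displays the triple u_1|o_ℓ. -/
import Mathlib


inductive BTree (α : Type) : Type
  | leaf : α → BTree α
  | node : BTree α → BTree α → BTree α

namespace BTree

variable {α : Type}

def leavesList : BTree α → List α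
  | .leaf a => [a]
  | .node l r => leavesList l ++ leavesList r

/-- `a` is a leaf label of `T`. -/
def IsLeaf (T : BTree α) (a : α) : Prop := a ∈ T.leavesList

/-- A valid rooted binary tree has pairwise distinct leaf labels. -/
def Valid (T : BTree α) : Prop := T.leavesList.Nodup

/-- The root-to-leaf path (as a list of left/right choices) of the leaf labeled `x`, if any. -/
def find [DecidableEq α] : BTree α → α → Option (List Bool)
  | .leaf a, x => if x = a then some [] else none
  | .node l r, x =>
    match find l x with
    | some p => some (false :: p)
    | none => (find r x).map (fun p => true :: p)

def commonPrefix : List Bool → List Bool → List Bool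
  | a :: as, b :: bs => if a = b then a :: commonPrefix as bs else []
  | _, _ => []

/-- The (path to the) lowest common ancestor of leaves `p` and `q` in `T`. -/
def lcaPath [DecidableEq α] (T : BTree α) (p q : α) : Option (List Bool) :=
  match T.find p, T.find q with
  | some a, some b => some (commonPrefix a b)
  | _, _ => none

/-- The node at path `s` is a proper descendant of the node at path `t`. -/
def ProperDesc (s t : List Bool) : Prop := t <+: s ∧ t ≠ s

/-- `T` displays the rooted triple `pq|o`: the leaves are distinct and
`lca(p,q)` is a proper descendant of `lca(p,o) = lca(q,o)`. -/
def Displays [DecidableEq α] (T : BTree α) (p q o : α) : Prop :=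
  p ≠ q ∧ p ≠ o ∧ q ≠ o ∧
  ∃ u v, T.lcaPath p q = some u ∧ T.lcaPath p o = some v ∧
    T.lcaPath q o = some v ∧ ProperDesc u v

end BTree

section Triples

variable {α : Type} [DecidableEq α]

/-- A rooted triple `pq|o`: an unordered pair of leaves together with a third leaf. -/
abbrev RTriple (α : Type) := Sym2 α × α

/-- `T` displays the rooted triple `t`. -/
def DisplaysT (T : BTree α) (t : RTriple α) : Prop :=
  ∃ p q, t.1 = s(p, q) ∧ BTree.Displays T p q t.2

def DisplaysAll (T : BTree α) (R : Set (RTriple α)) : Prop := ∀ t ∈ R, DisplaysT T t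

/-- A triple set is consistent if some (valid) rooted binary tree displays all its triples. -/
def Consistent (R : Set (RTriple α)) : Prop := ∃ T : BTree α, T.Valid ∧ DisplaysAll T R

/-- Closure of a consistent triple set: the triples displayed by every tree displaying `R`. -/
def clC (R : Set (RTriple α)) : Set (RTriple α) :=
  {t | ∀ T : BTree α, T.Valid → DisplaysAll T R → DisplaysT T t}

/-- Closure of an arbitrary (possibly inconsistent) triple set:
triples entailed by some consistent subset. -/
def cl (R : Set (RTriple α)) : Set (RTriple α) :=
  {t | ∃ R' ⊆ R, Consistent R' ∧ t ∈ clC R'}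

end Triples

/-- `T` displays the triple u|o for a 2-element leaf set u. -/
def DisplaysU {α : Type} [DecidableEq α] (T : BTree α) (u : Sym2 α) (o : α) : Prop :=
  ∃ p q, u = s(p, q) ∧ BTree.Displays T p q o


lemma cp_comm : ∀ a b : List Bool, BTree.commonPrefix a b = BTree.commonPrefix b a
  | [], [] => rfl
  | [], _ :: _ => rfl
  | _ :: _, [] => rfl
  | x :: as, y :: bs => by
      by_cases h : x = y
      · subst h; simp [BTree.commonPrefix, cp_comm as bs]
      · simp [BTree.commonPrefix, h, Ne.symm h]

lemma cp_self : ∀ a : List Bool, BTree.commonPrefix a a = a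
  | [] => rfl
  | x :: as => by simp [BTree.commonPrefix, cp_self as]

lemma cp_prefix_left : ∀ a b : List Bool, BTree.commonPrefix a b <+: a
  | [], _ => by simp [BTree.commonPrefix]
  | _ :: _, [] => by simp [BTree.commonPrefix]
  | x :: as, y :: bs => by
      by_cases h : x = y
      · subst h; simpa [BTree.commonPrefix] using cp_prefix_left as bs
      · simp [BTree.commonPrefix, h]

lemma cp_key : ∀ a b c : List Bool,
    BTree.ProperDesc (BTree.commonPrefix a b) (BTree.commonPrefix a c) →
    BTree.commonPrefix b c = BTree.commonPrefix a c
  | [], b, c => by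
      rintro ⟨h1, h2⟩
      exfalso; apply h2
      have : BTree.commonPrefix [] b = [] := rfl
      rw [this] at h1 ⊢
      simpa using h1.length_le.antisymm (by simp)
  | x :: as, [], c => by
      rintro ⟨h1, h2⟩
      exfalso; apply h2
      have : BTree.commonPrefix (x :: as) [] = [] := rfl
      rw [this] at h1 ⊢
      simpa using h1.length_le.antisymm (by simp)
  | x :: as, y :: bs, [] => by
      rintro ⟨h1, h2⟩; rfl
  | x :: as, y :: bs, z :: cs => by
      rintro ⟨h1, h2⟩
      by_cases hxy : x = y
      · subst hxy
        by_cases hxz : x = z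
        · subst hxz
          simp only [BTree.commonPrefix, eq_self_iff_true, if_true] at h1 h2 ⊢
          rw [List.cons_prefix_cons] at h1
          exact congrArg _ (cp_key as bs cs ⟨h1.2, fun h => h2 (congrArg _ h)⟩)
        · simp only [BTree.commonPrefix, if_neg hxz, eq_self_iff_true, if_true]
      · exfalso; apply h2
        simp only [BTree.commonPrefix, if_neg hxy] at h1 ⊢
        simpa using h1.length_le.antisymm (by simp)

lemma lcaPath_some {α : Type} [DecidableEq α] {T : BTree α} {p q : α} {u : List Bool}
    (h : T.lcaPath p q = some u) :
    ∃ a b, T.find p = some a ∧ T.find q = some b ∧ BTree.commonPrefix a b = u := by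
  unfold BTree.lcaPath at h
  rcases ha : T.find p with _ | a <;> rcases hb : T.find q with _ | b <;> rw [ha, hb] at h <;>
    first
      | exact ⟨_, _, rfl, rfl, Option.some.inj h⟩
      | cases h

lemma lcaPath_of_find {α : Type} [DecidableEq α] {T : BTree α} {p q : α} {a b : List Bool}
    (ha : T.find p = some a) (hb : T.find q = some b) :
    T.lcaPath p q = some (BTree.commonPrefix a b) := by
  unfold BTree.lcaPath; rw [ha, hb]

lemma displays_symm {α : Type} [DecidableEq α] {T : BTree α} {p q o : α}
    (h : T.Displays p q o) : T.Displays q p o := by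
  obtain ⟨h1, h2, h3, u, v, hpq, hpo, hqo, hpd⟩ := h
  obtain ⟨a, b, ha, hb, hab⟩ := lcaPath_some hpq
  refine ⟨Ne.symm h1, h3, h2, u, v, ?_, hqo, hpo, hpd⟩
  rw [lcaPath_of_find hb ha, cp_comm b a, hab]

lemma dyadic2 {α : Type} [DecidableEq α] {T : BTree α} {x y c e : α}
    (h1 : T.Displays x y c) (h2 : T.Displays x c e) : T.Displays x y e := by
  obtain ⟨hxy, hxc, hyc, u, v, hxy', hxc', hyc', hpd1⟩ := h1
  obtain ⟨_, hxe, hce, v2, w, hxc2, hxe', hce', hpd2⟩ := h2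
  rw [hxc'] at hxc2
  injection hxc2 with hv; subst hv
  obtain ⟨px, py, hfx, hfy, hu⟩ := lcaPath_some hxy'
  obtain ⟨px', pe, hfx', hfe, hw⟩ := lcaPath_some hxe'
  rw [hfx] at hfx'; injection hfx' with hpx; subst hpx
  -- ProperDesc u w
  have hpduw : BTree.ProperDesc u w := by
    refine ⟨hpd2.1.trans hpd1.1, fun hwu => ?_⟩
    exact hpd1.2 (hpd1.1.eq_of_length (le_antisymm hpd1.1.length_le (hwu ▸ hpd2.1).length_le))
  have hkey : BTree.commonPrefix py pe = w := by
    have := cp_key px py pe (by rw [hu, hw]; exact hpduw)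
    rw [this, hw]
  have hye : y ≠ e := by
    intro h; subst h
    rw [hfy] at hfe; injection hfe with h'; subst h'
    have hpyw : py = w := by rw [← hkey, cp_self]
    have hl1 : w.length < v.length :=
      lt_of_le_of_ne hpd2.1.length_le fun hh => hpd2.2 (hpd2.1.eq_of_length hh)
    have hl2 : v.length ≤ u.length := hpd1.1.length_le
    have hl3 : u.length ≤ py.length := by
      rw [← hu]; exact (cp_comm px py ▸ cp_prefix_left py px).length_le
    rw [hpyw] at hl3
    omega
  exact ⟨hxy, hxe, hye, u, w, hxy', hxe', by rw [lcaPath_of_find hfy hfe, hkey], hpduw⟩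

/-- Chained entailment along an acyclic hyperpath: if consecutive triples u_k|o_k are
compatible (each consecutive pair of node sets shares exactly one leaf, with
o_k ∈ u_{k+1} \ u_k), then any tree displaying all ℓ triples displays u_1|o_ℓ. -/
theorem stmt15 {α : Type} [DecidableEq α] (ℓ : ℕ) (hℓ : 1 ≤ ℓ)
    (u : ℕ → Sym2 α) (o : ℕ → α)
    (hcompat : ∀ k, k + 1 < ℓ →
      (∃! x : α, x ∈ u k ∧ x ∈ u (k + 1)) ∧ o k ∈ u (k + 1) ∧ o k ∉ u k)
    (T : BTree α) (hT : T.Valid)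
    (hdisp : ∀ k < ℓ, DisplaysU T (u k) (o k)) :
    DisplaysU T (u 0) (o (ℓ - 1)) := by
  -- backwards induction along the chain
  have main : ∀ j k, k + j + 1 = ℓ → DisplaysU T (u k) (o (ℓ - 1)) := by
    intro j
    induction j with
    | zero =>
      intro k hk
      have : k = ℓ - 1 := by omega
      subst this
      exact hdisp _ (by omega)
    | succ j ih =>
      intro k hk
      have ihk : DisplaysU T (u (k + 1)) (o (ℓ - 1)) := ih (k + 1) (by omega)
      obtain ⟨⟨x, ⟨hxk, hxk1⟩, -⟩, hok1, hokk⟩ := hcompat k (by omega)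
      obtain ⟨p, q, hupq, hdpq⟩ := ihk
      obtain ⟨p', q', huk, hd'⟩ := hdisp k (by omega)
      have hxo : x ≠ o k := fun h => hokk (h ▸ hxk)
      rw [hupq, Sym2.mem_iff] at hok1 hxk1
      -- Displays T x (o k) (o (ℓ - 1))
      have hstep : BTree.Displays T x (o k) (o (ℓ - 1)) := by
        rcases hxk1 with h | h <;> rcases hok1 with h' | h'
        · exact absurd (h.trans h'.symm) hxo
        · rw [← h, ← h'] at hdpq; exact hdpq
        · rw [← h, ← h'] at hdpq; exact displays_symm hdpq
        · exact absurd (h.trans h'.symm) hxo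
      rw [huk, Sym2.mem_iff] at hxk
      rcases hxk with h | h
      · subst h
        exact ⟨x, q', huk, dyadic2 hd' hstep⟩
      · subst h
        exact ⟨x, p', by rw [huk, Sym2.eq_swap], dyadic2 (displays_symm hd') hstep⟩
  exact main (ℓ - 1) 0 (by omega)
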